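/- arXiv:2305.18290 — 6 statements merged into one kernel-verified Lean document; each statement's English description precedes it below -/
import Mathlib

section
/- If two reward functions r and r' satisfy r'(x,y) = r(x,y) + f(x), they induce the same Plackett-Luce ranking distribution: for any prompt x, answers y₁,…,y_K, and permutation τ of {1,…,K}, ∏_{k=1}^{K} exp(r'(x,y_{τ(k)})) / Σ_{j=k}^{K} exp(r'(x,y_{τ(j)})) = ∏_{k=1}^{K} exp(r(x,y_{τ(k)})) / Σ_{j=k}^{K} exp(r(x,y_{τ(j)})). -/
/-- Two reward functions differing by a function of the prompt alone induce the same
Plackett-Luce ranking distribution. -/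
theorem plackett_luce_shift_invariant {X Y : Type*}
    (r r' : X → Y → ℝ) (f : X → ℝ)
    (h : ∀ x y, r' x y = r x y + f x)
    (K : ℕ) (hK : 0 < K) (x : X) (y : Fin K → Y) (τ : Equiv.Perm (Fin K)) :
    ∏ k : Fin K, Real.exp (r' x (y (τ k))) / ∑ j ∈ Finset.Ici k, Real.exp (r' x (y (τ j))) =
    ∏ k : Fin K, Real.exp (r x (y (τ k))) / ∑ j ∈ Finset.Ici k, Real.exp (r x (y (τ j))) := by
  apply Finset.prod_congr rfl
  intro k _
  simp only [h, Real.exp_add, ← Finset.sum_mul]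
  rw [mul_div_mul_right]
  exact Real.exp_ne_zero _
end

section
/- For any reward function r : X × Y → ℝ, define r'(x,y) = r(x,y) − β·log(Σ_{y'} π_ref(y'|x)·exp(r(x,y')/β)). Then r' lies in the same equivalence class as r (they differ by a function of x only), and r'(x,y) = β·log(π_r(y|x)/π_ref(y|x)), where π_r is the optimal policy induced by r. -/
/-- Normalizing a reward by the log-partition function yields an equivalent reward
(differing from `r` by a function of `x` only) which equals
`β·log(π_r(y|x)/π_ref(y|x))` for the optimal policy `π_r` induced by `r`. -/
theorem reward_projection {X Y : Type*} [Fintype Y]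
    (πref : X → Y → ℝ) (hrefpos : ∀ x y, 0 < πref x y)
    (href1 : ∀ x, ∑ y, πref x y = 1)
    (β : ℝ) (hβ : 0 < β)
    (r : X → Y → ℝ)
    (r' : X → Y → ℝ)
    (hr' : ∀ x y, r' x y =
      r x y - β * Real.log (∑ y', πref x y' * Real.exp (r x y' / β)))
    (πr : X → Y → ℝ)
    (hπr : ∀ x y, πr x y =
      πref x y * Real.exp (r x y / β) / (∑ y', πref x y' * Real.exp (r x y' / β))) :
    (∃ f : X → ℝ, ∀ x y, r x y - r' x y = f x) ∧
    (∀ x y, r' x y = β * Real.log (πr x y / πref x y)) := by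
  constructor
  · exact ⟨fun x => β * Real.log (∑ y', πref x y' * Real.exp (r x y' / β)),
      fun x y => by rw [hr']; ring⟩
  · intro x y
    have hZ : 0 < ∑ y', πref x y' * Real.exp (r x y' / β) := by
      have : Nonempty Y := ⟨y⟩
      exact Finset.sum_pos (fun i _ => mul_pos (hrefpos x i) (Real.exp_pos _))
        Finset.univ_nonempty
    have hp : πr x y / πref x y = Real.exp (r x y / β) / (∑ y', πref x y' * Real.exp (r x y' / β)) := by
      rw [hπr, div_div, mul_comm (∑ y', πref x y' * Real.exp (r x y' / β)) (πref x y),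
        mul_div_mul_left _ _ (ne_of_gt (hrefpos x y))]
    rw [hr', hp, Real.log_div (Real.exp_ne_zero _) (ne_of_gt hZ), Real.log_exp]
    field_simp
end

section
/- Every equivalence class of reward functions contains a reward of the form r(x,y) = β·log(π(y|x)/π_ref(y|x)) for some family of probability distributions π(·|x) on Y. Specifically, given any reward r₀, the function r(x,y) = β·log(π_{r₀}(y|x)/π_ref(y|x)) is equivalent to r₀ (where π_{r₀} is the optimal policy for r₀). -/
open Finset Real

theorem log_gibbs_div_weight {Y : Type*} [Fintype Y] (w s : Y → ℝ) (hw : ∀ y, 0 < w y) (y : Y) :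
    log (w y * exp (s y) / (∑ y', w y' * exp (s y')) / w y) =
      s y - log (∑ y', w y' * exp (s y')) := by
  have hZ : 0 < ∑ y', w y' * exp (s y') :=
    sum_pos (fun y' _ => mul_pos (hw y') (exp_pos _)) ⟨y, mem_univ y⟩
  rw [div_right_comm, mul_div_cancel_left₀ _ (hw y).ne', log_div (exp_ne_zero _) hZ.ne', log_exp]

theorem reward_class_representative_general {X Y : Type*} [Fintype Y]
    (πref : X → Y → ℝ) (hrefpos : ∀ x y, 0 < πref x y)
    (β : ℝ) (hβ : 0 < β)
    (r₀ : X → Y → ℝ)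
    (πr₀ : X → Y → ℝ)
    (hπr₀ : ∀ x y, πr₀ x y =
      πref x y * Real.exp (r₀ x y / β) / (∑ y', πref x y' * Real.exp (r₀ x y' / β)))
    (r : X → Y → ℝ)
    (hr : ∀ x y, r x y = β * Real.log (πr₀ x y / πref x y)) :
    ∃ f : X → ℝ, ∀ x y, r x y - r₀ x y = f x := by
  refine ⟨fun x => -β * log (∑ y', πref x y' * exp (r₀ x y' / β)), fun x y => ?_⟩
  rw [hr, hπr₀, log_gibbs_div_weight (πref x) (fun y => r₀ x y / β) (hrefpos x)]
  field_simp
  ring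

/-- Every equivalence class of reward functions contains a reward of the form
`β·log(π(y|x)/π_ref(y|x))`: for any reward `r₀`, the reward
`r(x,y) = β·log(π_{r₀}(y|x)/π_ref(y|x))` (with `π_{r₀}` the optimal policy of `r₀`)
is equivalent to `r₀`, i.e. differs from it by a function of `x` alone. -/
theorem reward_class_representative {X Y : Type*} [Fintype Y]
    (πref : X → Y → ℝ) (hrefpos : ∀ x y, 0 < πref x y)
    (href1 : ∀ x, ∑ y, πref x y = 1)
    (β : ℝ) (hβ : 0 < β)
    (r₀ : X → Y → ℝ)
    (πr₀ : X → Y → ℝ)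
    (hπr₀ : ∀ x y, πr₀ x y =
      πref x y * Real.exp (r₀ x y / β) / (∑ y', πref x y' * Real.exp (r₀ x y' / β)))
    (r : X → Y → ℝ)
    (hr : ∀ x y, r x y = β * Real.log (πr₀ x y / πref x y)) :
    ∃ f : X → ℝ, ∀ x y, r x y - r₀ x y = f x :=
  reward_class_representative_general πref hrefpos β hβ r₀ πr₀ hπr₀ r hr
end

section
/- Uniqueness of the DPO reparameterization: if π and π' are families of probability distributions on Y with β·log(π'(y|x)/π_ref(y|x)) = β·log(π(y|x)/π_ref(y|x)) + f(x) for all x, y and some f : X → ℝ, then f ≡ 0 and π = π'. Hence within each equivalence class of rewards, the reward representable as β·log(π(y|x)/π_ref(y|x)) is unique. -/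
/-- Uniqueness of the DPO reparameterization: if two families of full-support
probability distributions `π`, `π'` give rewards `β·log(π(y|x)/π_ref(y|x))` differing
by a function `f` of `x` only, then `f ≡ 0` and `π = π'`. -/
theorem dpo_reparameterization_unique {X Y : Type*} [Fintype Y]
    (πref π π' : X → Y → ℝ)
    (hrefpos : ∀ x y, 0 < πref x y) (href1 : ∀ x, ∑ y, πref x y = 1)
    (hpos : ∀ x y, 0 < π x y) (h1 : ∀ x, ∑ y, π x y = 1)
    (hpos' : ∀ x y, 0 < π' x y) (h1' : ∀ x, ∑ y, π' x y = 1)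
    (β : ℝ) (hβ : 0 < β) (f : X → ℝ)
    (h : ∀ x y, β * Real.log (π' x y / πref x y) =
      β * Real.log (π x y / πref x y) + f x) :
    (∀ x, f x = 0) ∧ π = π' := by
  have key : ∀ x y, π' x y = π x y * Real.exp (f x / β) := by
    intro x y
    have hy := h x y
    rw [Real.log_div (hpos' x y).ne' (hrefpos x y).ne',
        Real.log_div (hpos x y).ne' (hrefpos x y).ne'] at hy
    have hlog : Real.log (π' x y) = Real.log (π x y) + f x / β := by
      field_simp at hy ⊢
      linarith
    have := congrArg Real.exp hlog
    rwa [Real.exp_log (hpos' x y), Real.exp_add, Real.exp_log (hpos x y)] at this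
  have hf : ∀ x, f x = 0 := by
    intro x
    have hs : (1 : ℝ) = Real.exp (f x / β) := by
      calc (1 : ℝ) = ∑ y, π' x y := (h1' x).symm
        _ = ∑ y, π x y * Real.exp (f x / β) := by simp [key]
        _ = (∑ y, π x y) * Real.exp (f x / β) := (Finset.sum_mul ..).symm
        _ = Real.exp (f x / β) := by rw [h1 x, one_mul]
    have h0 : f x / β = 0 := by
      have : Real.exp (f x / β) = Real.exp 0 := by rw [Real.exp_zero]; exact hs.symm
      exact Real.exp_injective this
    have := (div_eq_zero_iff.mp h0)
    rcases this with h | h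
    · exact h
    · exact absurd h hβ.ne'
  refine ⟨hf, ?_⟩
  funext x y
  rw [key x y, hf x, zero_div, Real.exp_zero, mul_one]
end

section
/- Substituting the reparameterized reward r*(x,y) = β·log(π*(y|x)/π_ref(y|x)) + β·log Z(x) into the Bradley-Terry model yields p(y₁ ≻ y₂ | x) = σ(β·log(π*(y₁|x)/π_ref(y₁|x)) − β·log(π*(y₂|x)/π_ref(y₂|x))), where σ is the logistic sigmoid; in particular the Z(x) terms cancel. -/
/-- Substituting the reparameterized reward
`r*(x,y) = β·log(π*(y|x)/π_ref(y|x)) + β·log Z(x)` into the Bradley-Terry model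
yields the sigmoid of the difference of implicit rewards: the `Z(x)` terms cancel. -/
theorem bradley_terry_dpo_substitution {X Y : Type*} [Fintype Y]
    (πstar πref : X → Y → ℝ)
    (hstarpos : ∀ x y, 0 < πstar x y) (hstar1 : ∀ x, ∑ y, πstar x y = 1)
    (hrefpos : ∀ x y, 0 < πref x y) (href1 : ∀ x, ∑ y, πref x y = 1)
    (β : ℝ) (hβ : 0 < β) (Z : X → ℝ)
    (σ : ℝ → ℝ) (hσ : ∀ t, σ t = 1 / (1 + Real.exp (-t)))
    (rstar : X → Y → ℝ)
    (hr : ∀ x y, rstar x y = β * Real.log (πstar x y / πref x y) + β * Real.log (Z x)) :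
    ∀ (x : X) (y₁ y₂ : Y),
      Real.exp (rstar x y₁) / (Real.exp (rstar x y₁) + Real.exp (rstar x y₂)) =
      σ (β * Real.log (πstar x y₁ / πref x y₁) - β * Real.log (πstar x y₂ / πref x y₂)) := by
  intro x y₁ y₂
  rw [hσ, hr, hr]
  set A := β * Real.log (πstar x y₁ / πref x y₁) with hA
  set B := β * Real.log (πstar x y₂ / πref x y₂) with hB
  set c := β * Real.log (Z x) with hc
  have h1 : (0:ℝ) < Real.exp (A + c) + Real.exp (B + c) := by positivity
  have h2 : (0:ℝ) < 1 + Real.exp (-(A - B)) := by positivity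
  field_simp
  rw [mul_add, mul_one, ← Real.exp_add]
  ring_nf
end

section
/- In the Plackett-Luce model with the DPO reparameterization, the partition function cancels: if r(x,y) = β·log(π(y|x)/π_ref(y|x)) + β·log Z(x), then ∏_{k=1}^{K} exp(r(x,y_{τ(k)})) / Σ_{j=k}^{K} exp(r(x,y_{τ(j)})) = ∏_{k=1}^{K} exp(β·log(π(y_{τ(k)}|x)/π_ref(y_{τ(k)}|x))) / Σ_{j=k}^{K} exp(β·log(π(y_{τ(j)}|x)/π_ref(y_{τ(j)}|x))). -/
/-- In the Plackett-Luce model with the DPO reparameterization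
`r(x,y) = β·log(π(y|x)/π_ref(y|x)) + β·log Z(x)`, the partition function cancels. -/
theorem plackett_luce_partition_cancels {X Y : Type*}
    (π πref : X → Y → ℝ)
    (hpos : ∀ x y, 0 < π x y) (hrefpos : ∀ x y, 0 < πref x y)
    (β : ℝ) (hβ : 0 < β) (Z : X → ℝ) (hZ : ∀ x, 0 < Z x)
    (r : X → Y → ℝ)
    (hr : ∀ x y, r x y = β * Real.log (π x y / πref x y) + β * Real.log (Z x))
    (K : ℕ) (x : X) (y : Fin K → Y) (τ : Equiv.Perm (Fin K)) :
    ∏ k : Fin K, Real.exp (r x (y (τ k))) / ∑ j ∈ Finset.Ici k, Real.exp (r x (y (τ j))) =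
    ∏ k : Fin K, Real.exp (β * Real.log (π x (y (τ k)) / πref x (y (τ k)))) /
      ∑ j ∈ Finset.Ici k, Real.exp (β * Real.log (π x (y (τ j)) / πref x (y (τ j)))) := by
  apply Finset.prod_congr rfl
  intro k _
  have hc : (0:ℝ) < Real.exp (β * Real.log (Z x)) := Real.exp_pos _
  have hterm : ∀ j : Fin K, Real.exp (r x (y (τ j))) =
      Real.exp (β * Real.log (π x (y (τ j)) / πref x (y (τ j)))) *
        Real.exp (β * Real.log (Z x)) := by
    intro j; rw [hr, Real.exp_add]
  rw [hterm k]
  have hsum : ∑ j ∈ Finset.Ici k, Real.exp (r x (y (τ j))) =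
      (∑ j ∈ Finset.Ici k, Real.exp (β * Real.log (π x (y (τ j)) / πref x (y (τ j))))) *
        Real.exp (β * Real.log (Z x)) := by
    rw [Finset.sum_mul]; exact Finset.sum_congr rfl fun j _ => hterm j
  rw [hsum, mul_div_mul_right _ _ (ne_of_gt hc)]
end
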